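/- Let (X_k, A_k), k = 1,...,m, be pairs of sets with A_k ⊆ X_k, and let B_k = X_k \ A_k. For a simplicial complex K with vertex set contained in [m], define Z_K(X,A) = ⋃_{σ ∈ K} D(σ) ⊆ X_1 × ⋯ × X_m, where D(σ) = Y_1 × ⋯ × Y_m with Y_i = X_i if i ∈ σ and Y_i = A_i if i ∉ σ. Similarly define Z_{K*}(X,B) using D*(ω) = Z_1 × ⋯ × Z_m with Z_i = X_i if i ∈ ω, Z_i = B_i otherwise, where K* is the Alexander dual of K relative to [m]. Then Z_{K*}(X,B) = (X_1 × ⋯ × X_m) \ Z_K(X,A). -/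

import Mathlib

/-- A simplicial complex on vertex set contained in `[m] = Fin m`. -/
def IsSimplicialComplex {m : ℕ} (K : Set (Finset (Fin m))) : Prop :=
  ∀ σ ∈ K, ∀ τ ⊆ σ, τ ∈ K

/-- The Alexander dual of `K` relative to `[m]`. -/
def alexanderDual {m : ℕ} (K : Set (Finset (Fin m))) : Set (Finset (Fin m)) :=
  {τ | τᶜ ∉ K}

/-- `D(σ) = Y_1 × ⋯ × Y_m` with `Y_i = X_i` if `i ∈ σ` and `Y_i = A_i` otherwise. -/
def DProd {m : ℕ} {α : Fin m → Type*} (X A : ∀ i, Set (α i)) (σ : Finset (Fin m)) :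
    Set (∀ i, α i) :=
  {f | ∀ i, f i ∈ if i ∈ σ then X i else A i}

/-- The generalized moment-angle complex `Z_K(X,A) = ⋃_{σ ∈ K} D(σ)`. -/
def ZComplex {m : ℕ} {α : Fin m → Type*} (X A : ∀ i, Set (α i))
    (K : Set (Finset (Fin m))) : Set (∀ i, α i) :=
  ⋃ σ ∈ K, DProd X A σ

/-!
A point `f` of `X_1 × ⋯ × X_m` lies in `D(σ)` exactly when the set of coordinates at which it
escapes `A` is contained in `σ`, and in `D*(τ)` exactly when that set contains `[m] \ τ`.
Because `K` is closed under subsets, `f ∈ Z_K(X,A)` thus says the escape set of `f` lies in `K`,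
while `f ∈ Z_{K*}(X,B)` says it does not.
-/

open Classical in
noncomputable def escapeSet {m : ℕ} {α : Fin m → Type*} (A : ∀ i, Set (α i)) (f : ∀ i, α i) :
    Finset (Fin m) :=
  {i | f i ∉ A i}

section

variable {m : ℕ} {α : Fin m → Type*} {X A : ∀ i, Set (α i)} {f : ∀ i, α i}

@[simp]
theorem mem_escapeSet {i : Fin m} : i ∈ escapeSet A f ↔ f i ∉ A i := by
  simp [escapeSet]

theorem mem_DProd_iff (hf : ∀ i, f i ∈ X i) {σ : Finset (Fin m)} :
    f ∈ DProd X A σ ↔ escapeSet A f ⊆ σ := by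
  refine ⟨fun h i hi => ?_, fun h i => ?_⟩
  · by_contra hiσ
    have hfA := h i
    rw [if_neg hiσ] at hfA
    exact mem_escapeSet.mp hi hfA
  · split_ifs with hiσ
    · exact hf i
    · by_contra hiA
      exact hiσ (h (mem_escapeSet.mpr hiA))

theorem mem_DProd_diff_iff {τ : Finset (Fin m)} :
    f ∈ DProd X (fun i => X i \ A i) τ ↔ (∀ i, f i ∈ X i) ∧ τᶜ ⊆ escapeSet A f := by
  refine ⟨fun h => ⟨fun i => ?_, fun i hi => ?_⟩, fun ⟨hf, hτ⟩ i => ?_⟩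
  · have hfi := h i
    split_ifs at hfi
    exacts [hfi, hfi.1]
  · have hfi := h i
    rw [if_neg (Finset.mem_compl.mp hi)] at hfi
    exact mem_escapeSet.mpr hfi.2
  · split_ifs with hi
    exacts [hf i, ⟨hf i, mem_escapeSet.mp (hτ (Finset.mem_compl.mpr hi))⟩]

theorem IsSimplicialComplex.mem_ZComplex_iff {K : Set (Finset (Fin m))}
    (hK : IsSimplicialComplex K) (hf : ∀ i, f i ∈ X i) :
    f ∈ ZComplex X A K ↔ escapeSet A f ∈ K := by
  simp only [ZComplex, Set.mem_iUnion, mem_DProd_iff hf, exists_prop]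
  exact ⟨fun ⟨σ, hσ, hsσ⟩ => hK σ hσ _ hsσ, fun hs => ⟨_, hs, subset_rfl⟩⟩

theorem IsSimplicialComplex.mem_ZComplex_alexanderDual_iff {K : Set (Finset (Fin m))}
    (hK : IsSimplicialComplex K) :
    f ∈ ZComplex X (fun i => X i \ A i) (alexanderDual K) ↔
      (∀ i, f i ∈ X i) ∧ escapeSet A f ∉ K := by
  simp only [ZComplex, Set.mem_iUnion, mem_DProd_diff_iff, alexanderDual, Set.mem_ofPred_eq,
    exists_prop]
  refine ⟨fun ⟨τ, hτ, hf, hτs⟩ => ⟨hf, fun hs => hτ (hK _ hs _ hτs)⟩,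
    fun ⟨hf, hs⟩ => ⟨(escapeSet A f)ᶜ, by simpa using hs, hf, by simp⟩⟩

end

theorem ZComplex_alexanderDual_compl_general {m : ℕ} {α : Fin m → Type*}
    (X A : ∀ i, Set (α i))
    (K : Set (Finset (Fin m))) (hK : IsSimplicialComplex K) :
    ZComplex X (fun i => X i \ A i) (alexanderDual K) =
      {f : ∀ i, α i | ∀ i, f i ∈ X i} \ ZComplex X A K := by
  ext f
  by_cases hf : ∀ i, f i ∈ X i
  · simp [hK.mem_ZComplex_alexanderDual_iff, hK.mem_ZComplex_iff hf, hf]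
  · simp [hK.mem_ZComplex_alexanderDual_iff, hf]

/-- `Z_{K*}(X,B) = (X_1 × ⋯ × X_m) \ Z_K(X,A)` where `B_k = X_k \ A_k`. -/
theorem ZComplex_alexanderDual_compl {m : ℕ} {α : Fin m → Type*}
    (X A : ∀ i, Set (α i)) (hA : ∀ i, A i ⊆ X i)
    (K : Set (Finset (Fin m))) (hK : IsSimplicialComplex K) :
    ZComplex X (fun i => X i \ A i) (alexanderDual K) =
      {f : ∀ i, α i | ∀ i, f i ∈ X i} \ ZComplex X A K :=
  ZComplex_alexanderDual_compl_general X A K hK
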